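/- Local robustness of the orthogonalized acquisition (Corollary 1): Under the stated assumptions, for any b ∈ ℝ^d, assume there exists δ > 0 such that E[exp(δ |bᵀ g|)] < ∞ and E[|r| exp(δ |bᵀ g|)] < ∞, and define the tilted expectation F(ε) := E[r exp(ε bᵀ g)] / E[exp(ε bᵀ g)] for |ε| < δ. Then F is differentiable at ε = 0 with F′(0) = 0; i.e., the orthogonalized acquisition is first-order insensitive to score-tilt perturbations of the sampling distribution. -/

import Mathlib

/-!
The orthogonalized acquisition `r = h - γᵀ g` is the least-squares residual of `h` on the score,
so the normal equations `Σ_g γ = Cov(g, h)` say exactly that `E[r gⱼ] = 0` for every `j`.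
Differentiating the tilted expectation `E[r e^{εX}] / E[e^{εX}]` with `X = bᵀ g` under the
integral sign (dominated by the exponential moment at `δ`) gives the derivative
`E[r X] - E[r] E[X]` at `ε = 0`, and both terms vanish since `E[r X] = 0` and `E[X] = 0`.
-/

open MeasureTheory ProbabilityTheory Matrix Real

section Tilting

variable {Ω : Type*} [MeasurableSpace Ω] {μ : Measure Ω}

lemma abs_mul_exp_mul_le {δ : ℝ} (hδ : 0 < δ) {x ε : ℝ} (hε : |ε| ≤ δ / 2) :
    |x| * exp (ε * x) ≤ 2 / δ * exp (δ * |x|) := by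
  have h_exp : exp (ε * x) ≤ exp (δ / 2 * |x|) :=
    exp_le_exp.mpr <| (le_abs_self _).trans <| by
      rw [abs_mul]; exact mul_le_mul_of_nonneg_right hε (abs_nonneg x)
  have h_abs : |x| ≤ 2 / δ * exp (δ / 2 * |x|) := by
    rw [div_mul_eq_mul_div, le_div_iff₀ hδ]
    linarith [add_one_le_exp (δ / 2 * |x|)]
  calc |x| * exp (ε * x) ≤ 2 / δ * exp (δ / 2 * |x|) * exp (δ / 2 * |x|) :=
        mul_le_mul h_abs h_exp (exp_pos _).le (by positivity)
    _ = 2 / δ * exp (δ * |x|) := by rw [mul_assoc, ← exp_add]; ring_nf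

theorem hasDerivAt_integral_mul_exp_mul {X Y : Ω → ℝ} {δ : ℝ} (hδ : 0 < δ)
    (hX : AEStronglyMeasurable X μ) (hY : AEStronglyMeasurable Y μ)
    (hint : Integrable (fun ω => |Y ω| * exp (δ * |X ω|)) μ) :
    HasDerivAt (fun ε => ∫ ω, Y ω * exp (ε * X ω) ∂μ) (∫ ω, Y ω * X ω ∂μ) 0 := by
  have h_meas : ∀ ε : ℝ, AEStronglyMeasurable (fun ω => Y ω * exp (ε * X ω)) μ := fun ε =>
    hY.mul (continuous_exp.comp_aestronglyMeasurable (hX.const_mul ε))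
  have hY_int : Integrable Y μ := hint.mono' hY <| .of_forall fun ω => by
    rw [norm_eq_abs]
    exact le_mul_of_one_le_right (abs_nonneg _) (one_le_exp (by positivity))
  have h_bound : ∀ ω, ∀ ε ∈ Metric.ball (0 : ℝ) (δ / 2),
      ‖Y ω * (X ω * exp (ε * X ω))‖ ≤ 2 / δ * (|Y ω| * exp (δ * |X ω|)) := fun ω ε hε => by
    rw [mem_ball_zero_iff, norm_eq_abs] at hε
    calc ‖Y ω * (X ω * exp (ε * X ω))‖ = |Y ω| * (|X ω| * exp (ε * X ω)) := by
          rw [norm_eq_abs, abs_mul, abs_mul, abs_of_pos (exp_pos _)]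
      _ ≤ |Y ω| * (2 / δ * exp (δ * |X ω|)) :=
          mul_le_mul_of_nonneg_left (abs_mul_exp_mul_le hδ hε.le) (abs_nonneg _)
      _ = 2 / δ * (|Y ω| * exp (δ * |X ω|)) := by ring
  have h_deriv : ∀ ω, ∀ ε ∈ Metric.ball (0 : ℝ) (δ / 2),
      HasDerivAt (fun ε => Y ω * exp (ε * X ω)) (Y ω * (X ω * exp (ε * X ω))) ε :=
    fun ω ε _ => by
      simpa [mul_comm] using ((hasDerivAt_mul_const (X ω)).exp (x := ε)).const_mul (Y ω)
  obtain ⟨-, h_hasDeriv⟩ := hasDerivAt_integral_of_dominated_loc_of_deriv_le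
    (Metric.ball_mem_nhds 0 (half_pos hδ)) (.of_forall h_meas) (by simpa using hY_int)
    (by simp only [zero_mul, exp_zero, mul_one]; exact hY.mul hX) (.of_forall h_bound)
    (hint.const_mul _) (.of_forall h_deriv)
  simpa using h_hasDeriv

theorem hasDerivAt_integral_exp_mul {X : Ω → ℝ} {δ : ℝ} (hδ : 0 < δ)
    (hX : AEStronglyMeasurable X μ) (hint : Integrable (fun ω => exp (δ * |X ω|)) μ) :
    HasDerivAt (fun ε => ∫ ω, exp (ε * X ω) ∂μ) (∫ ω, X ω ∂μ) 0 := by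
  simpa using hasDerivAt_integral_mul_exp_mul (Y := fun _ => 1) hδ hX aestronglyMeasurable_const
    (by simpa using hint)

theorem hasDerivAt_tilted_integral [IsProbabilityMeasure μ] {X Y : Ω → ℝ} {δ : ℝ} (hδ : 0 < δ)
    (hX : AEStronglyMeasurable X μ) (hY : AEStronglyMeasurable Y μ)
    (hexp : Integrable (fun ω => exp (δ * |X ω|)) μ)
    (hYexp : Integrable (fun ω => |Y ω| * exp (δ * |X ω|)) μ) :
    HasDerivAt (fun ε => (∫ ω, Y ω * exp (ε * X ω) ∂μ) / ∫ ω, exp (ε * X ω) ∂μ)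
      ((∫ ω, Y ω * X ω ∂μ) - (∫ ω, Y ω ∂μ) * ∫ ω, X ω ∂μ) 0 := by
  refine ((hasDerivAt_integral_mul_exp_mul hδ hX hY hYexp).div
    (hasDerivAt_integral_exp_mul hδ hX hexp) (by simp)).congr_deriv ?_
  simp

end Tilting

section Orthogonality

variable {Ω ι : Type*} [MeasurableSpace Ω] {μ : Measure Ω} [Fintype ι]

theorem integral_mul_sum_eq_zero {Y : Ω → ℝ} {g : Ω → ι → ℝ}
    (hint : ∀ i, Integrable (fun ω => Y ω * g ω i) μ) (horth : ∀ i, ∫ ω, Y ω * g ω i ∂μ = 0)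
    (b : ι → ℝ) : ∫ ω, Y ω * ∑ i, b i * g ω i ∂μ = 0 := by
  simp_rw [Finset.mul_sum, mul_left_comm (Y _)]
  rw [integral_finsetSum _ fun i _ => (hint i).const_mul (b i)]
  simp [integral_const_mul, horth]

theorem integral_mul_sub_integral_eq_integral_mul {f g : Ω → ℝ}
    (hfg : Integrable (fun ω => g ω * f ω) μ) (hg : Integrable g μ) (hg0 : ∫ ω, g ω ∂μ = 0) :
    ∫ ω, g ω * (f ω - ∫ ω', f ω' ∂μ) ∂μ = ∫ ω, g ω * f ω ∂μ := by
  simp_rw [mul_sub]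
  rw [integral_sub hfg (hg.mul_const _), integral_mul_const, hg0, zero_mul, sub_zero]

theorem integral_sub_sum_mul_eq_zero [IsFiniteMeasure μ] {h : Ω → ℝ} {g : Ω → ι → ℝ}
    (hh : MemLp h 2 μ) (hg : ∀ i, MemLp (fun ω => g ω i) 2 μ) (hgmean : ∀ i, ∫ ω, g ω i ∂μ = 0)
    {Sg : Matrix ι ι ℝ} (hSg : ∀ i j, Sg i j = ∫ ω, g ω i * g ω j ∂μ) {covgh : ι → ℝ}
    (hcovgh : ∀ i, covgh i = ∫ ω, g ω i * (h ω - ∫ ω', h ω' ∂μ) ∂μ) {γ : ι → ℝ}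
    (hγ : Sg *ᵥ γ = covgh) (j : ι) :
    ∫ ω, (h ω - ∑ i, γ i * g ω i) * g ω j ∂μ = 0 := by
  have hgg : ∀ i, Integrable (fun ω => g ω j * g ω i) μ := fun i => (hg j).integrable_mul (hg i)
  have hgh : Integrable (fun ω => g ω j * h ω) μ := (hg j).integrable_mul hh
  have h_cov : ∫ ω, g ω j * h ω ∂μ = covgh j := by
    rw [hcovgh, integral_mul_sub_integral_eq_integral_mul hgh ((hg j).integrable one_le_two)
      (hgmean j)]
  have h_sum_int : ∀ i ∈ Finset.univ, Integrable (fun ω => γ i * (g ω j * g ω i)) μ :=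
    fun i _ => (hgg i).const_mul (γ i)
  have h_gram : ∫ ω, g ω j * ∑ i, γ i * g ω i ∂μ = (Sg *ᵥ γ) j := by
    simp_rw [Finset.mul_sum, mul_left_comm (g _ j)]
    rw [integral_finsetSum _ h_sum_int]
    simp [mulVec, dotProduct, integral_const_mul, hSg, mul_comm]
  have h_gram_int : Integrable (fun ω => g ω j * ∑ i, γ i * g ω i) μ := by
    simp_rw [Finset.mul_sum, mul_left_comm (g _ j)]
    exact integrable_finsetSum _ h_sum_int
  simp_rw [mul_comm _ (g _ j), mul_sub]
  rw [integral_sub hgh h_gram_int, h_cov, h_gram, hγ, sub_self]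

end Orthogonality

/-- **Local robustness of the orthogonalized acquisition (Corollary 1).**
For any direction `b`, the tilted expectation
`F(ε) = E[r e^{ε bᵀg}]/E[e^{ε bᵀg}]` of the orthogonalized acquisition
`r = h − γᵀ g` is differentiable at `0` with `F′(0) = 0`. -/
theorem orthogonalized_acquisition_local_robustness
    {Ω : Type*} [MeasurableSpace Ω] (μ : Measure Ω) [IsProbabilityMeasure μ]
    {d : ℕ} (h : Ω → ℝ) (g : Ω → Fin d → ℝ)
    (hh : MemLp h 2 μ)
    (hg : ∀ i, MemLp (fun ω => g ω i) 2 μ)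
    (hgmean : ∀ i, ∫ ω, g ω i ∂μ = 0)
    (Sg : Matrix (Fin d) (Fin d) ℝ)
    (hSg : ∀ i j, Sg i j = ∫ ω, g ω i * g ω j ∂μ)
    (hSginv : IsUnit Sg.det)
    (covgh : Fin d → ℝ)
    (hcovgh : ∀ i, covgh i = ∫ ω, g ω i * (h ω - ∫ ω', h ω' ∂μ) ∂μ)
    (γ : Fin d → ℝ) (hγ : γ = Sg⁻¹ *ᵥ covgh)
    (r : Ω → ℝ) (hr : ∀ ω, r ω = h ω - ∑ i, γ i * g ω i)
    (b : Fin d → ℝ) (δ : ℝ) (hδ : 0 < δ)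
    (hexp : Integrable (fun ω => Real.exp (δ * |∑ i, b i * g ω i|)) μ)
    (hrexp : Integrable (fun ω => |r ω| * Real.exp (δ * |∑ i, b i * g ω i|)) μ)
    (F : ℝ → ℝ)
    (hF : ∀ ε : ℝ, |ε| < δ →
      F ε = (∫ ω, r ω * Real.exp (ε * ∑ i, b i * g ω i) ∂μ)
              / (∫ ω, Real.exp (ε * ∑ i, b i * g ω i) ∂μ)) :
    HasDerivAt F 0 0 := by
  obtain rfl : r = fun ω => h ω - ∑ i, γ i * g ω i := funext hr
  set X : Ω → ℝ := fun ω => ∑ i, b i * g ω i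
  have hX : MemLp X 2 μ := memLp_finsetSum _ fun i _ => (hg i).const_mul (b i)
  have hr2 : MemLp (fun ω => h ω - ∑ i, γ i * g ω i) 2 μ :=
    hh.sub (memLp_finsetSum _ fun i _ => (hg i).const_mul (γ i))
  have hnormal : Sg *ᵥ γ = covgh := by
    rw [hγ, mulVec_mulVec, mul_nonsing_inv Sg hSginv, one_mulVec]
  have hrX : ∫ ω, (h ω - ∑ i, γ i * g ω i) * X ω ∂μ = 0 :=
    integral_mul_sum_eq_zero (fun i => hr2.integrable_mul (hg i))
      (integral_sub_sum_mul_eq_zero hh hg hgmean hSg hcovgh hnormal) b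
  have hXmean : ∫ ω, X ω ∂μ = 0 := by
    rw [integral_finsetSum _ fun i _ => ((hg i).integrable one_le_two).const_mul (b i)]
    simp [integral_const_mul, hgmean]
  have hquot :=
    hasDerivAt_tilted_integral hδ hX.aestronglyMeasurable hr2.aestronglyMeasurable hexp hrexp
  rw [hrX, hXmean, mul_zero, sub_zero] at hquot
  refine hquot.congr_of_eventuallyEq ?_
  filter_upwards [Metric.ball_mem_nhds (0 : ℝ) hδ] with ε hε
  exact hF ε (by simpa using hε)
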